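/- Let λ be an L-dominant weight (⟨λ, α^∨⟩ ≥ 0 for all simple roots α ≠ α_k) such that λ + ρ is regular, and let w ∈ W be the unique Weyl group element with w(λ + ρ) strictly dominant. Then the set of positive roots inverted by w is exactly {α ∈ N^+ : ⟨λ + ρ, α^∨⟩ < 0}, where N^+ is the set of positive roots whose simple-root decomposition involves α_k. -/

import Mathlib

/-!
The Weyl group acts by isometries, and a weight that is strictly dominant pairs nonnegatively
with every positive root. So `w` inverts the positive root `α` iff
`⟪λ + ρ, α⟫ = ⟪w (λ + ρ), w α⟫ < 0`, regularity ruling out `0`. If `α` does not involve `α_k`,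
it is a nonnegative combination of simple roots `β ≠ α_k`, with which `λ + ρ` pairs positively
since `⟨ρ, β^∨⟩ = 1`; such an `α` is therefore never inverted.
-/

/-- The pairing `⟨λ, α^∨⟩ = 2(λ,α)/(α,α)` of a weight with a coroot. -/
noncomputable def pairing {E : Type*} [NormedAddCommGroup E] [InnerProductSpace ℝ E]
    (lam α : E) : ℝ :=
  2 * (inner ℝ lam α : ℝ) / (inner ℝ α α : ℝ)

open scoped RealInnerProductSpace

section

variable {E : Type*} [NormedAddCommGroup E] [InnerProductSpace ℝ E]

lemma pairing_eq_mul_inner (x α : E) : pairing x α = 2 / ⟪α, α⟫ * ⟪x, α⟫ := by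
  rw [pairing, div_mul_eq_mul_div, mul_comm]

lemma pairing_add_left (x y α : E) : pairing (x + y) α = pairing x α + pairing y α := by
  simp only [pairing_eq_mul_inner, inner_add_left, mul_add]

-- A junk value (division by `⟪0, 0⟫ = 0`) that lets the sign lemmas below drop `α ≠ 0`.
lemma pairing_zero_right (x : E) : pairing x 0 = 0 := by
  simp [pairing]

lemma two_div_inner_self_pos {α : E} (hα : α ≠ 0) : 0 < 2 / ⟪α, α⟫ :=
  div_pos two_pos (real_inner_self_pos.2 hα)

lemma pairing_pos_iff {x α : E} : 0 < pairing x α ↔ 0 < ⟪x, α⟫ := by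
  rcases eq_or_ne α 0 with rfl | hα
  · simp [pairing_zero_right]
  · rw [pairing_eq_mul_inner, mul_pos_iff_of_pos_left (two_div_inner_self_pos hα)]

lemma pairing_neg_iff {x α : E} : pairing x α < 0 ↔ ⟪x, α⟫ < 0 := by
  rcases eq_or_ne α 0 with rfl | hα
  · simp [pairing_zero_right]
  · rw [pairing_eq_mul_inner, ← smul_eq_mul,
      smul_neg_iff_of_pos_left (two_div_inner_self_pos hα)]

lemma pairing_ne_zero_iff {x α : E} : pairing x α ≠ 0 ↔ ⟪x, α⟫ ≠ 0 := by
  rw [ne_iff_lt_or_gt, ne_iff_lt_or_gt, pairing_neg_iff, pairing_pos_iff]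

lemma inner_reflection_reflection (α x y : E) :
    ⟪x - pairing x α • α, y - pairing y α • α⟫ = ⟪x, y⟫ := by
  rcases eq_or_ne α 0 with rfl | hα
  · simp
  have hαα : ⟪α, α⟫ ≠ 0 := (real_inner_self_pos.2 hα).ne'
  simp only [pairing, inner_sub_left, inner_sub_right, real_inner_smul_left,
    real_inner_smul_right, real_inner_comm α x, real_inner_comm α y]
  field_simp
  ring

lemma inner_apply_apply_of_mem_closure {S : Set (E ≃ₗ[ℝ] E)}
    (hS : ∀ u ∈ S, ∀ x y, ⟪u x, u y⟫ = ⟪x, y⟫) {u : E ≃ₗ[ℝ] E}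
    (hu : u ∈ Subgroup.closure S) (x y : E) : ⟪u x, u y⟫ = ⟪x, y⟫ := by
  induction hu using Subgroup.closure_induction generalizing x y with
  | mem g hg => exact hS g hg x y
  | one => rfl
  | mul g h _ _ ihg ihh => exact (ihg _ _).trans (ihh x y)
  | inv g _ ihg => simpa using (ihg (g⁻¹ x) (g⁻¹ y)).symm

lemma inner_nonneg_of_eq_sum_smul {Δ : Finset E} {c : E → ℝ} {x γ : E}
    (hc : ∀ β, 0 ≤ c β) (hγ : γ = ∑ β ∈ Δ, c β • β)
    (hx : ∀ β ∈ Δ, 0 < c β → 0 ≤ ⟪x, β⟫) : 0 ≤ ⟪x, γ⟫ := by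
  rw [hγ, inner_sum]
  refine Finset.sum_nonneg fun β hβ => ?_
  rw [real_inner_smul_right]
  rcases (hc β).eq_or_lt with hcβ | hcβ
  · simp [← hcβ]
  · exact mul_nonneg hcβ.le (hx β hβ hcβ)

end

theorem stmt4_general {E : Type*} [NormedAddCommGroup E] [InnerProductSpace ℝ E]
    (Φpos Δ : Finset E)
    (αk : E)
    -- decomposition of positive roots in the simple roots, with nonnegative coefficients
    (coeff : E → E → ℝ)
    (hcoeff : ∀ α ∈ Φpos, (∀ β, 0 ≤ coeff α β) ∧ α = ∑ β ∈ Δ, coeff α β • β)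
    -- ρ is the sum of the fundamental weights
    (ρ : E) (hρ : ∀ α ∈ Δ, pairing ρ α = 1)
    -- λ is L-dominant and λ + ρ is regular
    (lam : E) (hlam : ∀ α ∈ Δ, α ≠ αk → 0 ≤ pairing lam α)
    (hregular : ∀ α : E, (α ∈ Φpos ∨ -α ∈ Φpos) → pairing (lam + ρ) α ≠ 0)
    -- the simple reflections, and the Weyl group element `w`
    (σ : E → (E ≃ₗ[ℝ] E))
    (hσ : ∀ α ∈ Δ, ∀ x : E, σ α x = x - pairing x α • α)
    (w : E ≃ₗ[ℝ] E)
    (hw : w ∈ Subgroup.closure {u : E ≃ₗ[ℝ] E | ∃ α ∈ Δ, u = σ α})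
    (hstab : ∀ u ∈ Subgroup.closure {u : E ≃ₗ[ℝ] E | ∃ α ∈ Δ, u = σ α},
      ∀ α : E, (α ∈ Φpos ∨ -α ∈ Φpos) → (u α ∈ Φpos ∨ -(u α) ∈ Φpos))
    -- `w(λ + ρ)` is strictly dominant
    (hwdom : ∀ α ∈ Δ, 0 < pairing (w (lam + ρ)) α) :
    {α : E | α ∈ Φpos ∧ -(w α) ∈ Φpos} =
      {α : E | α ∈ Φpos ∧ coeff α αk ≠ 0 ∧ pairing (lam + ρ) α < 0} := by
  have hw_inner : ∀ x y, ⟪w x, w y⟫ = ⟪x, y⟫ := by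
    refine inner_apply_apply_of_mem_closure ?_ hw
    rintro _ ⟨β, hβ, rfl⟩ x y
    rw [hσ β hβ, hσ β hβ, inner_reflection_reflection]
  have hw_dom : ∀ γ ∈ Φpos, 0 ≤ ⟪w (lam + ρ), γ⟫ := fun γ hγ =>
    inner_nonneg_of_eq_sum_smul (hcoeff γ hγ).1 (hcoeff γ hγ).2
      fun β hβ _ => (pairing_pos_iff.1 (hwdom β hβ)).le
  ext α
  constructor
  · rintro ⟨hα, hwα⟩
    have hneg : ⟪lam + ρ, α⟫ < 0 := by
      have h := hw_dom _ hwα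
      rw [inner_neg_right, hw_inner] at h
      exact (neg_nonneg.1 h).lt_of_ne (pairing_ne_zero_iff.1 (hregular α (.inl hα)))
    refine ⟨hα, fun hk => hneg.not_ge ?_, pairing_neg_iff.2 hneg⟩
    refine inner_nonneg_of_eq_sum_smul (hcoeff α hα).1 (hcoeff α hα).2 fun β hβ hcβ => ?_
    have hβk : β ≠ αk := by rintro rfl; exact hcβ.ne' hk
    refine (pairing_pos_iff.1 ?_).le
    rw [pairing_add_left, hρ β hβ]
    linarith [hlam β hβ hβk]
  · rintro ⟨hα, -, hneg⟩
    refine ⟨hα, (hstab w hw α (.inl hα)).resolve_left fun hwα => ?_⟩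
    have h := hw_dom _ hwα
    rw [hw_inner] at h
    exact (pairing_neg_iff.1 hneg).not_ge h

/-- Let `λ` be an `L`-dominant weight such that `λ + ρ` is regular, and let `w` be the unique
Weyl group element such that `w(λ + ρ)` is strictly dominant.  Then the inversion set of `w`
is exactly `{α ∈ N⁺ | ⟨λ + ρ, α^∨⟩ < 0}`, where `N⁺` is the set of positive roots whose
simple-root decomposition involves `α_k`. -/
theorem stmt4 {E : Type*} [NormedAddCommGroup E] [InnerProductSpace ℝ E]
    (Φpos Δ : Finset E) (hΔΦ : Δ ⊆ Φpos)
    (αk : E) (hαk : αk ∈ Δ)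
    -- decomposition of positive roots in the simple roots, with nonnegative coefficients
    (coeff : E → E → ℝ)
    (hcoeff : ∀ α ∈ Φpos, (∀ β, 0 ≤ coeff α β) ∧ α = ∑ β ∈ Δ, coeff α β • β)
    -- roots are nonzero, and no root is both positive and negative
    (hroot : ∀ α ∈ Φpos, α ≠ 0)
    (hdisj : ∀ α ∈ Φpos, -α ∉ Φpos)
    -- ρ is the sum of the fundamental weights
    (ρ : E) (hρ : ∀ α ∈ Δ, pairing ρ α = 1)
    -- λ is L-dominant and λ + ρ is regular
    (lam : E) (hlam : ∀ α ∈ Δ, α ≠ αk → 0 ≤ pairing lam α)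
    (hregular : ∀ α : E, (α ∈ Φpos ∨ -α ∈ Φpos) → pairing (lam + ρ) α ≠ 0)
    -- the simple reflections, and the Weyl group element `w`
    (σ : E → (E ≃ₗ[ℝ] E))
    (hσ : ∀ α ∈ Δ, ∀ x : E, σ α x = x - pairing x α • α)
    (w : E ≃ₗ[ℝ] E)
    (hw : w ∈ Subgroup.closure {u : E ≃ₗ[ℝ] E | ∃ α ∈ Δ, u = σ α})
    (hstab : ∀ u ∈ Subgroup.closure {u : E ≃ₗ[ℝ] E | ∃ α ∈ Δ, u = σ α},
      ∀ α : E, (α ∈ Φpos ∨ -α ∈ Φpos) → (u α ∈ Φpos ∨ -(u α) ∈ Φpos))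
    -- `w(λ + ρ)` is strictly dominant
    (hwdom : ∀ α ∈ Δ, 0 < pairing (w (lam + ρ)) α) :
    {α : E | α ∈ Φpos ∧ -(w α) ∈ Φpos} =
      {α : E | α ∈ Φpos ∧ coeff α αk ≠ 0 ∧ pairing (lam + ρ) α < 0} :=
  stmt4_general Φpos Δ αk coeff hcoeff ρ hρ lam hlam hregular σ hσ w hw hstab hwdom
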